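/- arXiv:2404.07232 — 2 statements merged into one kernel-verified Lean document; each statement's English description precedes it below -/
import Mathlib

section
/- Let α : ℝ³ → ℝ^{3×3} be a C¹ matrix field that is 1-periodic in each coordinate, and let χ, χ' : ℝ³ → ℝ^{3×3} be C¹ matrix fields, 1-periodic in each coordinate, satisfying the row-wise curl conditions e_{jrk} ∂_r χ_{ik} = α_{ij} and e_{jrk} ∂_r χ'_{ik} = α_{ij} for all i, j. Then the helicity integral is gauge-independent: ∫_{[0,1]³} χ_{ij} α_{ij} dx = ∫_{[0,1]³} χ'_{ij} α_{ij} dx (summation over i, j). -/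
open scoped BigOperators
open MeasureTheory

/-- Levi-Civita symbol on `Fin 3`. -/
noncomputable def eps (i j k : Fin 3) : ℝ :=
  (((i : ℕ) : ℝ) - ((j : ℕ) : ℝ)) * (((j : ℕ) : ℝ) - ((k : ℕ) : ℝ)) *
    (((k : ℕ) : ℝ) - ((i : ℕ) : ℝ)) / 2

/-- Partial derivative in the `r`-th coordinate direction on `ℝ³`. -/
noncomputable def pd (r : Fin 3) (f : (Fin 3 → ℝ) → ℝ) (x : Fin 3 → ℝ) : ℝ :=
  fderiv ℝ f x (Pi.single r 1)

/-! The difference `δ = χ - χ'` of the two potentials is curl-free. The pointwise identity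
`δ : curl χ - curl δ : χ = e_{jrk} ∂_r (δ_{ij} χ_{ik})` therefore writes the integrand
`δ : α` as a sum of partial derivatives of periodic C¹ functions, and each of these
integrates to zero over the unit cube by the divergence theorem, because the contributions
of opposite faces cancel. -/

noncomputable def curl (χ : Fin 3 → Fin 3 → (Fin 3 → ℝ) → ℝ) (i j : Fin 3) (x : Fin 3 → ℝ) : ℝ :=
  ∑ r, ∑ k, eps j r k * pd r (χ i k) x

lemma eps_swap (j r k : Fin 3) : eps j r k = -eps k r j := by
  unfold eps; ring

lemma pd_sub {f g : (Fin 3 → ℝ) → ℝ} {x : Fin 3 → ℝ} (hf : DifferentiableAt ℝ f x)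
    (hg : DifferentiableAt ℝ g x) (r : Fin 3) : pd r (f - g) x = pd r f x - pd r g x := by
  simp [pd, fderiv_sub hf hg]

lemma pd_mul {f g : (Fin 3 → ℝ) → ℝ} {x : Fin 3 → ℝ} (hf : DifferentiableAt ℝ f x)
    (hg : DifferentiableAt ℝ g x) (r : Fin 3) :
    pd r (f * g) x = pd r f x * g x + f x * pd r g x := by
  simp [pd, fderiv_mul hf hg]; ring

lemma continuous_pd {f : (Fin 3 → ℝ) → ℝ} (hf : ContDiff ℝ 1 f) (r : Fin 3) :
    Continuous (pd r f) :=
  (hf.continuous_fderiv one_ne_zero).clm_apply continuous_const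

lemma curl_sub {χ χ' : Fin 3 → Fin 3 → (Fin 3 → ℝ) → ℝ} {x : Fin 3 → ℝ}
    (hχ : ∀ i k, DifferentiableAt ℝ (χ i k) x) (hχ' : ∀ i k, DifferentiableAt ℝ (χ' i k) x)
    (i j : Fin 3) : curl (χ - χ') i j x = curl χ i j x - curl χ' i j x := by
  simp only [curl, Pi.sub_apply, pd_sub (hχ i _) (hχ' i _), mul_sub, Finset.sum_sub_distrib]

lemma curl_eq_neg_sum (χ : Fin 3 → Fin 3 → (Fin 3 → ℝ) → ℝ) (i k : Fin 3) (x : Fin 3 → ℝ) :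
    curl χ i k x = -∑ r, ∑ j, eps j r k * pd r (χ i j) x := by
  simp only [curl, eps_swap k, neg_mul, Finset.sum_neg_distrib]

/-- Row-wise analogue of `div (A × B) = B ⬝ curl A - A ⬝ curl B`. -/
lemma sum_mul_curl_sub_sum_curl_mul {A B : Fin 3 → Fin 3 → (Fin 3 → ℝ) → ℝ} {x : Fin 3 → ℝ}
    (hA : ∀ i j, DifferentiableAt ℝ (A i j) x) (hB : ∀ i j, DifferentiableAt ℝ (B i j) x) :
    ∑ i, ∑ j, A i j x * curl B i j x - ∑ i, ∑ k, curl A i k x * B i k x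
      = ∑ i, ∑ j, ∑ r, ∑ k, eps j r k * pd r (A i j * B i k) x := by
  have hB_term : ∑ i, ∑ j, ∑ r, ∑ k, eps j r k * (A i j x * pd r (B i k) x)
      = ∑ i, ∑ j, A i j x * curl B i j x := by
    simp only [curl, Finset.mul_sum]
    exact Finset.sum_congr rfl fun i _ => Finset.sum_congr rfl fun j _ =>
      Finset.sum_congr rfl fun r _ => Finset.sum_congr rfl fun k _ => by ring
  have hA_term : ∑ i, ∑ j, ∑ r, ∑ k, eps j r k * (pd r (A i j) x * B i k x)
      = -∑ i, ∑ k, curl A i k x * B i k x := by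
    simp only [curl_eq_neg_sum, neg_mul, Finset.sum_neg_distrib, neg_neg, Finset.sum_mul]
    refine Finset.sum_congr rfl fun i _ => ?_
    calc _ = ∑ r, ∑ j, ∑ k, eps j r k * (pd r (A i j) x * B i k x) := Finset.sum_comm
      _ = ∑ r, ∑ k, ∑ j, eps j r k * (pd r (A i j) x * B i k x) :=
          Finset.sum_congr rfl fun _ _ => Finset.sum_comm
      _ = _ := by
          rw [Finset.sum_comm]
          exact Finset.sum_congr rfl fun _ _ => Finset.sum_congr rfl fun _ _ =>
            Finset.sum_congr rfl fun _ _ => by ring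
  simp only [pd_mul (hA _ _) (hB _ _), mul_add, Finset.sum_add_distrib, hA_term, hB_term]
  ring

theorem integral_fderiv_apply_single_eq_zero_of_periodic {n : ℕ} {E : Type*}
    [NormedAddCommGroup E] [NormedSpace ℝ E] {f : (Fin (n + 1) → ℝ) → E}
    (hf : ContDiff ℝ 1 f) (r : Fin (n + 1)) (hper : ∀ x, f (x + Pi.single r 1) = f x) :
    ∫ x in Set.Icc (0 : Fin (n + 1) → ℝ) 1, fderiv ℝ f x (Pi.single r 1) = 0 := by
  have hsum : ∀ x, ∑ i, Pi.single (M := fun _ => _ → _ →L[ℝ] E) r (fderiv ℝ f) i x (Pi.single i 1)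
      = fderiv ℝ f x (Pi.single r 1) := fun x => by
    rw [Finset.sum_eq_single r (fun i _ hi => by simp [hi]) (by simp)]; simp
  have hcont : Continuous fun x => fderiv ℝ f x := hf.continuous_fderiv one_ne_zero
  have hdiv := integral_divergence_of_hasFDerivAt_off_countable' (a := 0) (b := 1) zero_le_one
    (Pi.single r f) (Pi.single r (fderiv ℝ f)) ∅ Set.countable_empty
    (fun i => by
      rcases eq_or_ne i r with rfl | hi
      · simpa using hf.continuous.continuousOn
      · rw [Pi.single_eq_of_ne hi]; exact continuousOn_const)
    (fun x _ i => by
      rcases eq_or_ne i r with rfl | hi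
      · simpa using (hf.differentiable one_ne_zero x).hasFDerivAt
      · rw [Pi.single_eq_of_ne hi, Pi.single_eq_of_ne hi]; exact hasFDerivAt_const (0 : E) x)
    (by simpa only [hsum] using (hcont.clm_apply continuous_const).integrableOn_Icc)
  rw [← funext hsum, hdiv]
  refine Finset.sum_eq_zero fun i _ => ?_
  rcases eq_or_ne i r with rfl | hi
  · have hface : ∀ y : Fin n → ℝ,
        (i.insertNth 1 y : Fin (n + 1) → ℝ) = i.insertNth 0 y + Pi.single i 1 := fun y => by
      rw [← sub_eq_iff_eq_add', Fin.insertNth_sub_same, sub_zero]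
    simp [hface, hper]
  · simp [hi]

lemma integral_sum_eps_mul_pd_eq_zero {g : Fin 3 → Fin 3 → Fin 3 → (Fin 3 → ℝ) → ℝ}
    (hg : ∀ i j k, ContDiff ℝ 1 (g i j k))
    (hper : ∀ i j k x r, g i j k (x + Pi.single r 1) = g i j k x) :
    ∫ x in Set.Icc (0 : Fin 3 → ℝ) 1, ∑ i, ∑ j, ∑ r, ∑ k, eps j r k * pd r (g i j k) x = 0 := by
  have hc : ∀ i j k r, Continuous (pd r (g i j k)) := fun i j k r => continuous_pd (hg i j k) r
  rw [integral_finsetSum _ fun i _ => (by fun_prop : Continuous _).integrableOn_Icc]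
  refine Finset.sum_eq_zero fun i _ => ?_
  rw [integral_finsetSum _ fun j _ => (by fun_prop : Continuous _).integrableOn_Icc]
  refine Finset.sum_eq_zero fun j _ => ?_
  rw [integral_finsetSum _ fun r _ => (by fun_prop : Continuous _).integrableOn_Icc]
  refine Finset.sum_eq_zero fun r _ => ?_
  rw [integral_finsetSum _ fun k _ => (by fun_prop : Continuous _).integrableOn_Icc]
  refine Finset.sum_eq_zero fun k _ => ?_
  rw [integral_const_mul]
  unfold pd
  rw [integral_fderiv_apply_single_eq_zero_of_periodic (hg i j k) r
    (hper i j k · r), mul_zero]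

theorem helicity_gauge_independent_general
    (α χ χ' : Fin 3 → Fin 3 → (Fin 3 → ℝ) → ℝ)
    (hα : ∀ i j, ContDiff ℝ 1 (α i j))
    (hχ : ∀ i j, ContDiff ℝ 1 (χ i j))
    (hχ' : ∀ i j, ContDiff ℝ 1 (χ' i j))
    (hper_χ : ∀ i j (x : Fin 3 → ℝ) (r : Fin 3), χ i j (x + Pi.single r 1) = χ i j x)
    (hper_χ' : ∀ i j (x : Fin 3 → ℝ) (r : Fin 3), χ' i j (x + Pi.single r 1) = χ' i j x)
    (hcurl : ∀ i j x, ∑ r, ∑ k, eps j r k * pd r (χ i k) x = α i j x)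
    (hcurl' : ∀ i j x, ∑ r, ∑ k, eps j r k * pd r (χ' i k) x = α i j x) :
    ∫ x in Set.Icc (0 : Fin 3 → ℝ) 1, ∑ i, ∑ j, χ i j x * α i j x
      = ∫ x in Set.Icc (0 : Fin 3 → ℝ) 1, ∑ i, ∑ j, χ' i j x * α i j x := by
  have hdiff {φ : Fin 3 → Fin 3 → (Fin 3 → ℝ) → ℝ} (hφ : ∀ i j, ContDiff ℝ 1 (φ i j)) x i j :
      DifferentiableAt ℝ (φ i j) x := (hφ i j).differentiable one_ne_zero x
  have hcurl_sub x i k : curl (χ - χ') i k x = 0 := by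
    rw [curl_sub (hdiff hχ x) (hdiff hχ' x), curl, curl, hcurl, hcurl', sub_self]
  have hdivergence x : ∑ i, ∑ j, χ i j x * α i j x - ∑ i, ∑ j, χ' i j x * α i j x
      = ∑ i, ∑ j, ∑ r, ∑ k, eps j r k * pd r ((χ - χ') i j * χ i k) x := by
    rw [← sum_mul_curl_sub_sum_curl_mul (A := χ - χ')
      (fun i j => (hdiff hχ x i j).sub (hdiff hχ' x i j)) (hdiff hχ x)]
    simp only [hcurl_sub, zero_mul, Finset.sum_const_zero, sub_zero]
    simp only [curl, hcurl, Pi.sub_apply, sub_mul, Finset.sum_sub_distrib]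
  have hint {φ : Fin 3 → Fin 3 → (Fin 3 → ℝ) → ℝ} (hφ : ∀ i j, ContDiff ℝ 1 (φ i j)) :
      IntegrableOn (fun x => ∑ i, ∑ j, φ i j x * α i j x) (Set.Icc 0 1) := by
    have := fun i j => (hφ i j).continuous
    have := fun i j => (hα i j).continuous
    exact (by fun_prop : Continuous _).integrableOn_Icc
  rw [← sub_eq_zero, ← integral_sub (hint hχ) (hint hχ'), integral_congr_ae
    (Filter.Eventually.of_forall hdivergence)]
  exact integral_sum_eps_mul_pd_eq_zero (fun i j k => ((hχ i j).sub (hχ' i j)).mul (hχ i k))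
    fun i j k x r => by simp only [Pi.mul_apply, Pi.sub_apply, hper_χ, hper_χ']

/-- Gauge independence of the dislocation helicity: if `χ` and `χ'` are two
1-periodic C¹ potentials with row-wise `curl χ = curl χ' = α`, then
`∫_{[0,1]³} χ : α dx = ∫_{[0,1]³} χ' : α dx`. -/
theorem helicity_gauge_independent
    (α χ χ' : Fin 3 → Fin 3 → (Fin 3 → ℝ) → ℝ)
    (hα : ∀ i j, ContDiff ℝ 1 (α i j))
    (hχ : ∀ i j, ContDiff ℝ 1 (χ i j))
    (hχ' : ∀ i j, ContDiff ℝ 1 (χ' i j))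
    (hper_α : ∀ i j (x : Fin 3 → ℝ) (r : Fin 3), α i j (x + Pi.single r 1) = α i j x)
    (hper_χ : ∀ i j (x : Fin 3 → ℝ) (r : Fin 3), χ i j (x + Pi.single r 1) = χ i j x)
    (hper_χ' : ∀ i j (x : Fin 3 → ℝ) (r : Fin 3), χ' i j (x + Pi.single r 1) = χ' i j x)
    (hcurl : ∀ i j x, ∑ r, ∑ k, eps j r k * pd r (χ i k) x = α i j x)
    (hcurl' : ∀ i j x, ∑ r, ∑ k, eps j r k * pd r (χ' i k) x = α i j x) :
    ∫ x in Set.Icc (0 : Fin 3 → ℝ) 1, ∑ i, ∑ j, χ i j x * α i j x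
      = ∫ x in Set.Icc (0 : Fin 3 → ℝ) 1, ∑ i, ∑ j, χ' i j x * α i j x :=
  helicity_gauge_independent_general α χ χ' hα hχ hχ' hper_χ hper_χ' hcurl hcurl'
end

section
/- Let v : ℝ³ × ℝ → ℝ³ and α, χ : ℝ³ × ℝ → ℝ^{3×3} be C² fields, 1-periodic in each spatial coordinate, satisfying for all i, j and all (x,t): (i) the potential condition e_{jrk} ∂_r χ_{ik} = α_{ij}, and (ii) the gauge evolution ∂_t χ_{ij} = − e_{jmn} α_{im} v_n. Then α satisfies the transport equation ∂_t α_{ij} + e_{jrk} ∂_r( e_{kmn} α_{im} v_n ) = 0, and the helicity is conserved: d/dt ∫_{[0,1]³} χ_{ij}(x,t) α_{ij}(x,t) dx = 0 for all t. -/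
/-!
Write `β = α × v`, so that the gauge law reads `∂ₜχ = -β`. Since time and space derivatives of a
`C²` field commute, `∂ₜα = ∂ₜ curl χ = curl ∂ₜχ = -curl β`, which is the transport equation.

For the helicity density, `∂ₜχ : α = -β : α` vanishes because
`β_{ij} α_{ij} = e_{jmn} α_{im} α_{ij} v_n` is antisymmetric in `(m, j)`. The remaining term
`χ : ∂ₜα = -χ : curl β` is `-div F` for the flux `F_r = e_{jrk} χ_{ij} β_{ik}`, because the other
half of `div F`, namely `e_{jrk} ∂_r χ_{ij} β_{ik} = -α : β`, vanishes for the same reason.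
The flux is periodic, so by the divergence theorem its divergence integrates to zero over the unit
cell (opposite faces cancel), and the time derivative passes under the integral over the cell.
-/

open scoped BigOperators
open MeasureTheory

/-- Spatial partial derivative in the `r`-th coordinate direction for a field
on space-time `ℝ³ × ℝ`. -/
noncomputable def pdx (r : Fin 3) (f : (Fin 3 → ℝ) × ℝ → ℝ) (z : (Fin 3 → ℝ) × ℝ) : ℝ :=
  fderiv ℝ f z (Pi.single r 1, 0)

/-- Time partial derivative for a field on space-time `ℝ³ × ℝ`. -/
noncomputable def pdt (f : (Fin 3 → ℝ) × ℝ → ℝ) (z : (Fin 3 → ℝ) × ℝ) : ℝ :=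
  fderiv ℝ f z (0, 1)

open Set

theorem sum_cross_mul_self_eq_zero (A : Fin 3 → Fin 3 → ℝ) (V : Fin 3 → ℝ) :
    ∑ i, ∑ j, (∑ m, ∑ n, eps j m n * A i m * V n) * A i j = 0 := by
  simp only [Fin.sum_univ_three, eps]; norm_num; ring

-- The `C Y` terms cancel, and swapping `j ↔ k` in `eps` turns the `B X` terms into `-A : B`.
theorem helicity_balance_algebra (A B C : Fin 3 → Fin 3 → ℝ) (X Y : Fin 3 → Fin 3 → Fin 3 → ℝ)
    (hA : ∀ i j, ∑ r, ∑ k, eps j r k * X r i k = A i j) (hBA : ∑ i, ∑ j, B i j * A i j = 0) :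
    ∑ i, ∑ j, (C i j * -∑ r, ∑ k, eps j r k * Y r i k + A i j * -B i j)
      + ∑ r, ∑ i, ∑ j, ∑ k, eps j r k * (C i j * Y r i k + B i k * X r i j) = 0 := by
  simp only [← hA] at hBA ⊢
  simp only [Fin.sum_univ_three, eps] at hBA ⊢
  norm_num at hBA ⊢
  linear_combination (-2) * hBA

theorem contDiff_pdx {n : WithTop ℕ∞} {f : (Fin 3 → ℝ) × ℝ → ℝ} (hf : ContDiff ℝ (n + 1) f)
    (r : Fin 3) : ContDiff ℝ n (pdx r f) :=
  (hf.fderiv_right le_rfl).clm_apply contDiff_const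

theorem pdt_pdx_comm {f : (Fin 3 → ℝ) × ℝ → ℝ} (hf : ContDiff ℝ 2 f) (r : Fin 3)
    (z : (Fin 3 → ℝ) × ℝ) : pdt (pdx r f) z = pdx r (pdt f) z := by
  have hf' : DifferentiableAt ℝ (fderiv ℝ f) z :=
    (hf.fderiv_right one_add_one_eq_two.le).differentiable one_ne_zero z
  unfold pdt pdx
  rw [fderiv_clm_apply hf' (differentiableAt_const _),
    fderiv_clm_apply hf' (differentiableAt_const _)]
  simpa using second_derivative_symmetric (fun y => (hf.differentiable two_ne_zero y).hasFDerivAt)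
    hf'.hasFDerivAt (0, 1) (Pi.single r 1, 0)

theorem pdt_add_curl_eq_zero (χ α β : Fin 3 → (Fin 3 → ℝ) × ℝ → ℝ)
    (hχ : ∀ k, ContDiff ℝ 2 (χ k))
    (hpot : ∀ j z, ∑ r, ∑ k, eps j r k * pdx r (χ k) z = α j z)
    (hgauge : ∀ j z, pdt (χ j) z = -β j z) (j : Fin 3) (z : (Fin 3 → ℝ) × ℝ) :
    pdt (α j) z + ∑ r, ∑ k, eps j r k * pdx r (β k) z = 0 := by
  have hd : ∀ r k, Differentiable ℝ (pdx r (χ k)) := fun r k =>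
    (contDiff_pdx (hχ k) r).differentiable one_ne_zero
  have hα : α j = fun w => ∑ r, ∑ k, eps j r k * pdx r (χ k) w := funext fun w => (hpot j w).symm
  have hpdtα : pdt (α j) z = ∑ r, ∑ k, eps j r k * pdx r (pdt (χ k)) z := by
    rw [hα]
    unfold pdt
    simp (disch := fun_prop) only [fderiv_fun_sum, fderiv_const_mul, sum_apply, smul_apply,
      smul_eq_mul]
    exact Finset.sum_congr rfl fun r _ => Finset.sum_congr rfl fun k _ =>
      congrArg (eps j r k * ·) (pdt_pdx_comm (hχ k) r z)
  have hpdtχ : ∀ k, pdt (χ k) = -β k := fun k => funext (hgauge k)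
  simp only [hpdtα, hpdtχ, pdx, fderiv_neg, neg_apply, mul_neg, Finset.sum_neg_distrib,
    neg_add_cancel]

noncomputable def helicityFlux (χ β : Fin 3 → Fin 3 → (Fin 3 → ℝ) × ℝ → ℝ) (r : Fin 3)
    (w : (Fin 3 → ℝ) × ℝ) : ℝ :=
  ∑ i, ∑ j, ∑ k, eps j r k * (χ i j w * β i k w)

theorem pdt_helicity_add_div_helicityFlux_eq_zero (χ α β : Fin 3 → Fin 3 → (Fin 3 → ℝ) × ℝ → ℝ)
    (hχ : ∀ i j, Differentiable ℝ (χ i j)) (hα : ∀ i j, Differentiable ℝ (α i j))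
    (hβ : ∀ i j, Differentiable ℝ (β i j))
    (hpot : ∀ i j z, ∑ r, ∑ k, eps j r k * pdx r (χ i k) z = α i j z)
    (hgauge : ∀ i j z, pdt (χ i j) z = -β i j z)
    (htransport : ∀ i j z, pdt (α i j) z + ∑ r, ∑ k, eps j r k * pdx r (β i k) z = 0)
    (horth : ∀ z, ∑ i, ∑ j, β i j z * α i j z = 0) (z : (Fin 3 → ℝ) × ℝ) :
    pdt (fun w => ∑ i, ∑ j, χ i j w * α i j w) z + ∑ r, pdx r (helicityFlux χ β r) z = 0 := by
  have hdensity : pdt (fun w => ∑ i, ∑ j, χ i j w * α i j w) z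
      = ∑ i, ∑ j, (χ i j z * pdt (α i j) z + α i j z * pdt (χ i j) z) := by
    unfold pdt
    simp (disch := fun_prop) only [fderiv_fun_sum, fderiv_fun_mul, sum_apply, add_apply,
      smul_apply, smul_eq_mul]
  have hflux : ∀ r, pdx r (helicityFlux χ β r) z = ∑ i, ∑ j, ∑ k,
      eps j r k * (χ i j z * pdx r (β i k) z + β i k z * pdx r (χ i j) z) := by
    intro r
    unfold pdx helicityFlux
    simp (disch := fun_prop) only [fderiv_fun_sum, fderiv_fun_mul, fderiv_const_apply, sum_apply,
      add_apply, smul_apply, smul_eq_mul, zero_apply, mul_zero, add_zero]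
  have hpdtα : ∀ i j, pdt (α i j) z = -∑ r, ∑ k, eps j r k * pdx r (β i k) z := fun i j =>
    eq_neg_of_add_eq_zero_left (htransport i j z)
  rw [hdensity]
  simp only [hflux, hgauge, hpdtα]
  exact helicity_balance_algebra _ _ _ _ _ (fun i j => hpot i j z) (horth z)

theorem integral_Icc_sum_fderiv_eq_zero_of_periodic {n : ℕ} {E : Type*} [NormedAddCommGroup E]
    [NormedSpace ℝ E] [CompleteSpace E] (F : Fin (n + 1) → (Fin (n + 1) → ℝ) → E)
    (hF : ∀ i, ContDiff ℝ 1 (F i)) (hper : ∀ i x, F i (x + Pi.single i 1) = F i x) :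
    ∫ x in Icc 0 1, ∑ i, fderiv ℝ (F i) x (Pi.single i 1) = 0 := by
  have hcont : Continuous fun x => ∑ i, fderiv ℝ (F i) x (Pi.single i 1) :=
    continuous_finsetSum _ fun i _ =>
      ((hF i).continuous_fderiv one_ne_zero).clm_apply continuous_const
  rw [integral_divergence_of_hasFDerivAt_off_countable' 0 1 zero_le_one F
    (fun i => fderiv ℝ (F i)) ∅ countable_empty (fun i => (hF i).continuous.continuousOn)
    (fun x _ i => ((hF i).differentiable one_ne_zero x).hasFDerivAt)
    (hcont.continuousOn.integrableOn_compact isCompact_Icc)]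
  refine Finset.sum_eq_zero fun i _ => ?_
  have hfaces : ∀ y, (i.insertNth (1 : ℝ) y : Fin (n + 1) → ℝ)
      = i.insertNth (0 : ℝ) y + Pi.single i 1 :=
    fun y => eq_add_of_sub_eq' (by rw [Fin.insertNth_sub_same, sub_zero])
  simp only [Pi.one_apply, Pi.zero_apply, hfaces, hper, sub_self]

theorem pdx_apply_eq_fderiv_slice {f : (Fin 3 → ℝ) × ℝ → ℝ} (hf : Differentiable ℝ f) (r : Fin 3)
    (x : Fin 3 → ℝ) (t : ℝ) : pdx r f (x, t) = fderiv ℝ (fun y => f (y, t)) x (Pi.single r 1) := by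
  rw [fderiv_fun_comp x (hf _) (by fun_prop),
    DifferentiableAt.fderiv_prodMk (by fun_prop) (by fun_prop)]
  simp [pdx]

theorem integral_Icc_sum_pdx_eq_zero_of_periodic (F : Fin 3 → (Fin 3 → ℝ) × ℝ → ℝ)
    (hF : ∀ r, ContDiff ℝ 1 (F r)) (t : ℝ)
    (hper : ∀ r x, F r (x + Pi.single r 1, t) = F r (x, t)) :
    ∫ x in Icc 0 1, ∑ r, pdx r (F r) (x, t) = 0 := by
  simp only [pdx_apply_eq_fderiv_slice ((hF _).differentiable one_ne_zero)]
  exact integral_Icc_sum_fderiv_eq_zero_of_periodic (fun r x => F r (x, t))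
    (fun r => (hF r).comp (by fun_prop)) hper

theorem hasDerivAt_setIntegral_pdt {g : (Fin 3 → ℝ) × ℝ → ℝ} (hg : ContDiff ℝ 1 g)
    {K : Set (Fin 3 → ℝ)} (hK : IsCompact K) (t : ℝ) :
    HasDerivAt (fun s => ∫ x in K, g (x, s)) (∫ x in K, pdt g (x, t)) t := by
  have : IsFiniteMeasure (volume.restrict K) := ⟨by simpa using hK.measure_lt_top⟩
  have hpdt : Continuous (pdt g) := (hg.continuous_fderiv one_ne_zero).clm_apply continuous_const
  obtain ⟨C, hC⟩ :=
    (hK.prod (isCompact_closedBall t 1)).exists_bound_of_continuousOn hpdt.continuousOn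
  refine (hasDerivAt_integral_of_dominated_loc_of_deriv_le
    (F := fun s x => g (x, s)) (F' := fun s x => pdt g (x, s)) (bound := fun _ => C)
    (Metric.ball_mem_nhds t one_pos)
    (Filter.Eventually.of_forall fun s => (hg.continuous.comp (by fun_prop)).aestronglyMeasurable)
    ((hg.continuous.comp (by fun_prop)).continuousOn.integrableOn_compact hK)
    ((hpdt.comp (by fun_prop)).aestronglyMeasurable) ?_ (integrable_const C) ?_).2
  · filter_upwards [ae_restrict_mem hK.measurableSet] with x hx s hs
    exact hC (x, s) ⟨hx, Metric.ball_subset_closedBall hs⟩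
  · refine Filter.Eventually.of_forall fun x s _ => ?_
    exact ((hg.differentiable one_ne_zero) (x, s)).hasFDerivAt.comp_hasDerivAt s
      ((hasDerivAt_const s x).prodMk (hasDerivAt_id s))

/-- If `curl χ = α` (row-wise) and the gauge evolves by `∂ₜ χ = −α × v`, then
`α` satisfies the transport equation `∂ₜ α + curl(α × v) = 0` and the helicity
`∫_{[0,1]³} χ : α dx` is conserved in time. -/
theorem helicity_conservation
    (v : Fin 3 → (Fin 3 → ℝ) × ℝ → ℝ)
    (α χ : Fin 3 → Fin 3 → (Fin 3 → ℝ) × ℝ → ℝ)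
    (hv : ∀ i, ContDiff ℝ 2 (v i))
    (hα : ∀ i j, ContDiff ℝ 2 (α i j))
    (hχ : ∀ i j, ContDiff ℝ 2 (χ i j))
    (hper_v : ∀ i (x : Fin 3 → ℝ) (t : ℝ) (r : Fin 3),
      v i (x + Pi.single r 1, t) = v i (x, t))
    (hper_α : ∀ i j (x : Fin 3 → ℝ) (t : ℝ) (r : Fin 3),
      α i j (x + Pi.single r 1, t) = α i j (x, t))
    (hper_χ : ∀ i j (x : Fin 3 → ℝ) (t : ℝ) (r : Fin 3),
      χ i j (x + Pi.single r 1, t) = χ i j (x, t))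
    (hpot : ∀ i j z, ∑ r, ∑ k, eps j r k * pdx r (χ i k) z = α i j z)
    (hgauge : ∀ i j z, pdt (χ i j) z = - ∑ m, ∑ n, eps j m n * α i m z * v n z) :
    (∀ i j z, pdt (α i j) z +
      ∑ r, ∑ k, eps j r k *
        pdx r (fun w => ∑ m, ∑ n, eps k m n * α i m w * v n w) z = 0) ∧
    (∀ t : ℝ, deriv (fun s =>
      ∫ x in Set.Icc (0 : Fin 3 → ℝ) 1, ∑ i, ∑ j, χ i j (x, s) * α i j (x, s)) t = 0) := by
  set β : Fin 3 → Fin 3 → (Fin 3 → ℝ) × ℝ → ℝ :=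
    fun i k w => ∑ m, ∑ n, eps k m n * α i m w * v n w with hβ_def
  have hβ : ∀ i k, ContDiff ℝ 2 (β i k) := fun i k => by fun_prop
  have htransport : ∀ i j z, pdt (α i j) z + ∑ r, ∑ k, eps j r k * pdx r (β i k) z = 0 :=
    fun i => pdt_add_curl_eq_zero (χ i) (α i) (β i) (hχ i) (hpot i) (hgauge i)
  refine ⟨htransport, fun t => ?_⟩
  have hflux : ∀ r, ContDiff ℝ 1 (helicityFlux χ β r) := fun r =>
    (by unfold helicityFlux; fun_prop : ContDiff ℝ 2 _).of_le one_le_two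
  have hdensity : ContDiff ℝ 1 (fun w => ∑ i, ∑ j, χ i j w * α i j w) :=
    (by fun_prop : ContDiff ℝ 2 _).of_le one_le_two
  have hbalance := pdt_helicity_add_div_helicityFlux_eq_zero χ α β
    (fun i j => (hχ i j).differentiable two_ne_zero)
    (fun i j => (hα i j).differentiable two_ne_zero)
    (fun i j => (hβ i j).differentiable two_ne_zero) hpot hgauge htransport
    (fun z => sum_cross_mul_self_eq_zero _ _)
  have hdiv := integral_Icc_sum_pdx_eq_zero_of_periodic (helicityFlux χ β) hflux t fun r x => by
    simp only [helicityFlux, hβ_def, hper_χ, hper_α, hper_v]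
  calc deriv _ t = ∫ x in Icc 0 1, pdt (fun w => ∑ i, ∑ j, χ i j w * α i j w) (x, t) :=
        (hasDerivAt_setIntegral_pdt hdensity isCompact_Icc t).deriv
    _ = -∫ x in Icc 0 1, ∑ r, pdx r (helicityFlux χ β r) (x, t) := by
        rw [← integral_neg]
        exact congrArg _ (funext fun x => eq_neg_of_add_eq_zero_left (hbalance (x, t)))
    _ = 0 := by rw [hdiv, neg_zero]
end
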